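/- Let p ≥ 3 be an integer. For every integer q > p, the graph D_p is not a contraction of the complement of the cycle C_q. Consequently, the class of connected D_p-contraction-free graphs contains infinitely many pairwise ⋖-incomparable graphs. -/

import Mathlib

/-!
Contracting the complement `Kᶜ` of a graph turns every independent set of the contracted graph
into a clique of `K`: representatives of pairwise non-adjacent parts are pairwise adjacent in `K`.
The `p ≥ 3` degree-two vertices of `D_p` are independent while `C_q` is triangle-free for `q ≥ 4`,
so `D_p` is not a contraction of `C̄_q`.

For the antichain take `C̄_q` with `q ≥ p + 2`. A contraction `C̄_m ⋖ C̄_n` with `m < n` has a part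
containing two vertices `a ≠ b`; the parts of the two `C_m`-neighbours of that part supply two
distinct common `C_n`-neighbours of `a` and `b`, impossible in a cycle of length at least `5`.
For `m > n` there are too few vertices.
-/

open SimpleGraph

/-- A contraction model of a graph `H` in a graph `G`: a map sending each vertex of `H`
to a connected subset of vertices of `G`, these subsets partitioning the vertices of `G`,
with distinct vertices of `H` adjacent iff the corresponding subsets are joined by an
edge of `G`. -/
def IsContractionModel {V W : Type*} (G : SimpleGraph V) (H : SimpleGraph W)
    (φ : W → Set V) : Prop :=
  (∀ w : W, (G.induce (φ w)).Connected) ∧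
  (∀ v : V, ∃! w : W, v ∈ φ w) ∧
  ∀ w w' : W, w ≠ w' →
    (H.Adj w w' ↔ ∃ a ∈ φ w, ∃ b ∈ φ w', G.Adj a b)

/-- `H` is a contraction of `G`: there is a contraction model of `H` in `G`
(equivalently, `H` can be obtained from `G` by a sequence of edge contractions). -/
def IsContraction {V W : Type*} (H : SimpleGraph W) (G : SimpleGraph V) : Prop :=
  ∃ φ : W → Set V, IsContractionModel G H φ

/-- The graph `D_r`: two adjacent vertices together with `r` further vertices,
each adjacent to exactly the first two. `D_2` is the diamond (`K₄` minus an edge). -/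
def Dgraph (r : ℕ) : SimpleGraph (Fin 2 ⊕ Fin r) :=
  SimpleGraph.fromRel (fun x _ => x.isLeft)

/-- Finite graphs, with vertex set `Fin n` for some `n`. -/
def FinGraph : Type := Σ n : ℕ, SimpleGraph (Fin n)

/-- The contraction relation on finite graphs. -/
def FinGraph.Contr (H G : FinGraph) : Prop := IsContraction H.2 G.2

/-- A set of finite graphs is well-quasi-ordered by the contraction relation if every
infinite sequence of its members contains two graphs, the earlier being a contraction
of the later. -/
def WqoByContraction (S : Set FinGraph) : Prop :=
  ∀ f : ℕ → FinGraph, (∀ k, f k ∈ S) → ∃ i j : ℕ, i < j ∧ FinGraph.Contr (f i) (f j)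

namespace IsContractionModel

variable {V W : Type*} {G K : SimpleGraph V} {H : SimpleGraph W} {φ : W → Set V}

lemma nonempty (hφ : IsContractionModel G H φ) (w : W) : (φ w).Nonempty :=
  Set.nonempty_coe_sort.1 (hφ.1 w).nonempty

lemma eq_of_mem (hφ : IsContractionModel G H φ) {v : V} {w w' : W} (hw : v ∈ φ w)
    (hw' : v ∈ φ w') : w = w' :=
  (hφ.2.1 v).unique hw hw'

lemma compl_adj_of_compl_adj (hφ : IsContractionModel Kᶜ H φ) {w w' : W} {x y : V}
    (h : Hᶜ.Adj w w') (hx : x ∈ φ w) (hy : y ∈ φ w') : K.Adj x y := by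
  rw [compl_adj] at h
  have hxy : x ≠ y := fun hxy => h.1 (hφ.eq_of_mem hx (hxy ▸ hy))
  by_contra hK
  exact h.2 ((hφ.2.2 w w' h.1).2 ⟨x, hx, y, hy, (compl_adj K x y).2 ⟨hxy, hK⟩⟩)

lemma card_le [Fintype V] [Fintype W] (hφ : IsContractionModel G H φ) :
    Fintype.card W ≤ Fintype.card V := by
  choose pick hpick using hφ.nonempty
  exact Fintype.card_le_of_injective pick fun w w' h =>
    hφ.eq_of_mem (hpick w) (h ▸ hpick w')

lemma exists_ne_mem_of_card_lt [Fintype V] [Fintype W] (hφ : IsContractionModel G H φ)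
    (h : Fintype.card W < Fintype.card V) : ∃ w, ∃ a ∈ φ w, ∃ b ∈ φ w, a ≠ b := by
  choose part hpart using fun v => (hφ.2.1 v).exists
  obtain ⟨a, b, hab, heq⟩ := Fintype.exists_ne_map_eq_of_card_lt part h
  exact ⟨part a, a, hpart a, b, heq ▸ hpart b, hab⟩

end IsContractionModel

lemma IsContraction.compl_isContained {V W : Type*} {K : SimpleGraph V} {H : SimpleGraph W}
    (h : IsContraction H Kᶜ) : Hᶜ ⊑ K := by
  obtain ⟨φ, hφ⟩ := h
  choose pick hpick using hφ.nonempty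
  exact ⟨⟨⟨pick, fun hww' => hφ.compl_adj_of_compl_adj hww' (hpick _) (hpick _)⟩,
    fun w w' (h : pick w = pick w') => hφ.eq_of_mem (hpick w) (h ▸ hpick w')⟩⟩

lemma completeGraph_isContained_Dgraph_compl (r : ℕ) : completeGraph (Fin r) ⊑ (Dgraph r)ᶜ :=
  ⟨⟨⟨Sum.inr, fun {i j} hij => by simpa [Dgraph, fromRel_adj] using hij⟩,
    Sum.inr_injective⟩⟩

lemma Dgraph_not_isContraction_compl {V : Type*} {K : SimpleGraph V} {p : ℕ} (hp : 3 ≤ p)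
    (hK : K.CliqueFree 3) : ¬ IsContraction (Dgraph p) Kᶜ := fun h =>
  (completeGraph_isContained_Dgraph_compl p).not_cliqueFree
    ((hK.mono hp).comap h.compl_isContained)

lemma cycleGraph_adj_iff_val {n : ℕ} (hn : 2 ≤ n) {u v : Fin n} :
    (cycleGraph n).Adj u v ↔
      u.val + 1 = v.val ∨ v.val + 1 = u.val ∨ (u.val + 1 = n ∧ v.val = 0) ∨
        (v.val + 1 = n ∧ u.val = 0) := by
  rw [cycleGraph_adj']
  have := u.isLt
  have := v.isLt
  rcases lt_trichotomy u v with h | rfl | h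
  · rw [Fin.coe_sub_iff_lt.2 h, Fin.coe_sub_iff_le.2 h.le]
    rw [Fin.lt_def] at h
    omega
  · rw [Fin.coe_sub_iff_le.2 le_rfl]
    omega
  · rw [Fin.coe_sub_iff_le.2 h.le, Fin.coe_sub_iff_lt.2 h]
    rw [Fin.lt_def] at h
    omega

lemma cycleGraph_cliqueFree_three {n : ℕ} (hn : 4 ≤ n) : (cycleGraph n).CliqueFree 3 := by
  intro s hs
  obtain ⟨a, b, c, hab, hac, hbc, -⟩ := is3Clique_iff.1 hs
  rw [cycleGraph_adj_iff_val (by omega)] at hab hac hbc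
  omega

lemma cycleGraph_commonNeighbors_subsingleton {n : ℕ} (hn : 5 ≤ n) {a b : Fin n}
    (hab : a ≠ b) : ((cycleGraph n).commonNeighbors a b).Subsingleton := by
  intro c hc d hd
  simp only [mem_commonNeighbors, cycleGraph_adj_iff_val (by omega : 2 ≤ n)] at hc hd
  rw [Ne, Fin.ext_iff] at hab
  rw [Fin.ext_iff]
  omega

lemma compl_reachable_of_degree_add_lt {V : Type*} [Fintype V] [DecidableEq V]
    {G : SimpleGraph V} [DecidableRel G.Adj] {u v : V} (h : G.Adj u v)
    (hdeg : G.degree u + G.degree v < Fintype.card V) : Gᶜ.Reachable u v := by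
  obtain ⟨w, -, hw⟩ := Finset.exists_mem_notMem_of_card_lt_card
    (s := G.neighborFinset u ∪ G.neighborFinset v) (t := Finset.univ)
    (by rw [Finset.card_univ]; exact (Finset.card_union_le _ _).trans_lt hdeg)
  simp only [Finset.mem_union, mem_neighborFinset, not_or] at hw
  have huw : Gᶜ.Adj u w := (compl_adj G u w).2 ⟨fun h' => hw.2 (h' ▸ h.symm), hw.1⟩
  have hwv : Gᶜ.Adj w v := (compl_adj G w v).2
    ⟨fun h' => hw.1 (h' ▸ h), fun h' => hw.2 h'.symm⟩
  exact huw.reachable.trans hwv.reachable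

lemma compl_preconnected_of_degree_add_lt {V : Type*} [Fintype V] [DecidableEq V]
    {G : SimpleGraph V} [DecidableRel G.Adj]
    (hdeg : ∀ u v, G.Adj u v → G.degree u + G.degree v < Fintype.card V) :
    Gᶜ.Preconnected := by
  intro u v
  by_cases huv : u = v
  · exact huv ▸ Reachable.refl u
  by_cases h : G.Adj u v
  · exact compl_reachable_of_degree_add_lt h (hdeg u v h)
  · exact ((compl_adj G u v).2 ⟨huv, h⟩).reachable

lemma cycleGraph_compl_connected {n : ℕ} (hn : 5 ≤ n) : (cycleGraph n)ᶜ.Connected := by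
  obtain ⟨n, rfl⟩ : ∃ m, n = m + 3 := ⟨n - 3, by omega⟩
  refine (connected_iff _).2 ⟨compl_preconnected_of_degree_add_lt fun u v _ => ?_, inferInstance⟩
  rw [cycleGraph_degree_three_le, cycleGraph_degree_three_le, Fintype.card_fin]
  omega

lemma cycleGraph_compl_not_isContraction {m n : ℕ} (hm : 4 ≤ m) (hmn : m < n) :
    ¬ IsContraction (cycleGraph m)ᶜ (cycleGraph n)ᶜ := by
  rintro ⟨φ, hφ⟩
  obtain ⟨w, a, ha, b, hb, hab⟩ := hφ.exists_ne_mem_of_card_lt (by simpa using hmn)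
  obtain ⟨m, rfl⟩ : ∃ k, m = k + 3 := ⟨m - 3, by omega⟩
  obtain ⟨u, hu, u', hu', huu'⟩ : ∃ u ∈ (cycleGraph (m + 3)).neighborFinset w,
      ∃ u' ∈ (cycleGraph (m + 3)).neighborFinset w, u ≠ u' := by
    rw [← Finset.one_lt_card, card_neighborFinset_eq_degree, cycleGraph_degree_three_le]
    omega
  rw [mem_neighborFinset, ← compl_compl (cycleGraph (m + 3))] at hu hu'
  obtain ⟨c, hc⟩ := hφ.nonempty u
  obtain ⟨d, hd⟩ := hφ.nonempty u'
  have hcommon : ∀ {x y}, y ∈ φ w → x ∈ φ u ∨ x ∈ φ u' → (cycleGraph n).Adj y x := by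
    rintro x y hy (hx | hx)
    · exact hφ.compl_adj_of_compl_adj hu hy hx
    · exact hφ.compl_adj_of_compl_adj hu' hy hx
  have hcd : c = d := cycleGraph_commonNeighbors_subsingleton (by omega) hab
    ⟨hcommon ha (.inl hc), hcommon hb (.inl hc)⟩ ⟨hcommon ha (.inr hd), hcommon hb (.inr hd)⟩
  exact huu' (hφ.eq_of_mem hc (hcd ▸ hd))

/-- Let `p ≥ 3`. For every `q > p`, the graph `D_p` is not a contraction
of the complement of the cycle `C_q`. Consequently, the class of connected
`D_p`-contraction-free graphs contains infinitely many pairwise incomparable graphs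
(an infinite antichain of the contraction relation). -/
theorem Dgraph_not_contraction_antihole (p : ℕ) (hp : 3 ≤ p) :
    (∀ q : ℕ, p < q → ¬ IsContraction (Dgraph p) (SimpleGraph.cycleGraph q)ᶜ) ∧
    (∃ f : ℕ → FinGraph,
      (∀ k, (f k).2.Connected ∧ ¬ IsContraction (Dgraph p) (f k).2) ∧
      (∀ i j : ℕ, i ≠ j → ¬ FinGraph.Contr (f i) (f j))) := by
  have hDp : ∀ q, p < q → ¬ IsContraction (Dgraph p) (cycleGraph q)ᶜ := fun q hq =>
    Dgraph_not_isContraction_compl hp (cycleGraph_cliqueFree_three (by omega))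
  refine ⟨hDp, fun k => ⟨p + 2 + k, (cycleGraph (p + 2 + k))ᶜ⟩,
    fun k => ⟨cycleGraph_compl_connected (by omega), hDp _ (by omega)⟩, ?_⟩
  intro i j hij hcontr
  change IsContraction (cycleGraph (p + 2 + i))ᶜ (cycleGraph (p + 2 + j))ᶜ at hcontr
  rcases hij.lt_or_gt with h | h
  · exact cycleGraph_compl_not_isContraction (by omega) (by omega) hcontr
  · obtain ⟨φ, hφ⟩ := hcontr
    have := hφ.card_le
    simp only [Fintype.card_fin] at this
    omega
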